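/- arXiv:1703.02451 — 2 statements merged into one kernel-verified Lean document; each statement's English description precedes it below -/
import Mathlib

section
/- All n! permutations of n elements can be produced from the identity by a sequence of n! - 1 transpositions; formally, for n ≥ 1 there exists a sequence of n! transpositions-prefixes: a list of n! permutations of Fin n, starting with the identity, containing every permutation exactly once, in which consecutive entries differ by a transposition. -/
/-!
The symmetric group on `Fin (n + 1)` is the disjoint union of the right cosets `Sₙ · cᵢ`, where
`Sₙ` fixes `0` and `cᵢ` is the cycle `(0 1 … i)`. Given an enumeration `L` of `Sₙ` in which
consecutive entries differ by a transposition on the left, walk through the cosets in the order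
`c₀, …, cₙ`, running through `L` forwards in one coset and backwards in the next. Since
`cᵢ₊₁ = (0 i+1) · cᵢ`, the jump between two cosets happens at a common `g ∈ L` and is left
multiplication by the conjugate `g (0 i+1) g⁻¹`, again a transposition. The resulting list has no
repetitions and length `(n + 1)!`, so it contains every permutation.
-/

open Nat Equiv Equiv.Perm

section Snake

variable {G H : Type*} [Group G] [Group H] (f : H →* G)

/-- The translates `f(L) * r` for `r ∈ R`, with `L` traversed alternately forwards and backwards. -/
def snake : List H → List G → List G
  | _, [] => []
  | L, r :: R => L.map (fun h => f h * r) ++ snake L.reverse R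

@[simp]
lemma snake_nil_left (R : List G) : snake f [] R = [] := by
  induction R with
  | nil => rfl
  | cons r R ih => simpa [snake] using ih

lemma length_snake (L : List H) (R : List G) :
    (snake f L R).length = L.length * R.length := by
  induction R generalizing L with
  | nil => rfl
  | cons r R ih => simp [snake, ih, Nat.mul_succ, add_comm]

lemma head?_snake_cons (L : List H) (r : G) (R : List G) :
    (snake f L (r :: R)).head? = L.head?.map (f · * r) := by
  cases L with
  | nil => simp
  | cons h L => simp [snake]

lemma mem_snake {L : List H} {R : List G} {g : G} :
    g ∈ snake f L R ↔ ∃ r ∈ R, ∃ h ∈ L, f h * r = g := by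
  induction R generalizing L with
  | nil => simp [snake]
  | cons r R ih => simp [snake, ih]

lemma nodup_snake (hf : Function.Injective f) {L : List H} (hL : L.Nodup) {R : List G}
    (hR : R.Pairwise fun r r' => ∀ h, f h * r ≠ r') : (snake f L R).Nodup := by
  induction R generalizing L with
  | nil => exact List.nodup_nil
  | cons r R ih =>
    rw [List.pairwise_cons] at hR
    refine List.nodup_append.2 ⟨hL.map fun a b hab => hf (mul_right_cancel hab),
      ih (List.nodup_reverse.2 hL) hR.2, ?_⟩
    simp only [List.mem_map, mem_snake]
    rintro _ ⟨a, -, rfl⟩ _ ⟨r', hr', b, -, rfl⟩ hab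
    refine hR.1 r' hr' (b⁻¹ * a) ?_
    rw [map_mul, map_inv, mul_assoc, hab, inv_mul_cancel_left]

lemma isChain_snake {S : Set G} (hinv : ∀ s ∈ S, s⁻¹ ∈ S)
    (hconj : ∀ g, ∀ s ∈ S, g * s * g⁻¹ ∈ S) {L : List H}
    (hL : L.IsChain fun a b => f (b * a⁻¹) ∈ S) {R : List G}
    (hR : R.IsChain fun r r' => r' * r⁻¹ ∈ S) :
    (snake f L R).IsChain fun a b => b * a⁻¹ ∈ S := by
  induction R generalizing L with
  | nil => exact List.IsChain.nil
  | cons r R ih =>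
    have hL' : L.reverse.IsChain fun a b => f (b * a⁻¹) ∈ S :=
      List.isChain_reverse.2 <| hL.imp fun a b h => by simpa using hinv _ h
    refine List.isChain_append.2 ⟨?_, ih hL' hR.tail, ?_⟩
    · rw [List.isChain_map]
      exact hL.imp fun a b h => by simpa [mul_assoc] using h
    · cases R with
      | nil => simp [snake]
      | cons r' R =>
        simp only [List.getLast?_map, head?_snake_cons, List.head?_reverse, Option.mem_def,
          Option.map_eq_some_iff]
        rintro _ ⟨a, ha, rfl⟩ _ ⟨b, hb, rfl⟩
        obtain rfl : a = b := Option.some_injective _ (ha.symm.trans hb)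
        simpa [mul_assoc] using hconj (f a) _ (List.isChain_cons_cons.1 hR).1

end Snake

section Swap

variable {α : Type*} [DecidableEq α]

lemma Equiv.Perm.IsSwap.inv {σ : Perm α} (hσ : σ.IsSwap) : σ⁻¹.IsSwap := by
  obtain ⟨x, y, hxy, rfl⟩ := hσ
  exact ⟨x, y, hxy, swap_inv x y⟩

lemma Equiv.Perm.IsSwap.conj {σ : Perm α} (hσ : σ.IsSwap) (g : Perm α) :
    (g * σ * g⁻¹).IsSwap := by
  obtain ⟨x, y, hxy, rfl⟩ := hσ
  exact ⟨g x, g y, g.injective.ne hxy, (swap_apply_apply g x y).symm⟩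

end Swap

namespace Fin

variable {n : ℕ}

noncomputable def permSuccHom (n : ℕ) : Perm (Fin n) →* Perm (Fin (n + 1)) :=
  viaEmbeddingHom (succEmb n)

lemma permSuccHom_apply_zero (σ : Perm (Fin n)) : permSuccHom n σ 0 = 0 :=
  viaEmbedding_apply_of_notMem σ _ 0 fun ⟨i, hi⟩ => succ_ne_zero i hi

lemma permSuccHom_apply_succ (σ : Perm (Fin n)) (i : Fin n) :
    permSuccHom n σ i.succ = (σ i).succ :=
  viaEmbedding_apply σ (succEmb n) i

lemma permSuccHom_swap (a b : Fin n) : permSuccHom n (swap a b) = swap a.succ b.succ := by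
  ext x : 1
  induction x using Fin.cases with
  | zero =>
    rw [permSuccHom_apply_zero, swap_apply_of_ne_of_ne (succ_ne_zero a).symm
      (succ_ne_zero b).symm]
  | succ i => rw [permSuccHom_apply_succ, (succ_injective n).swap_apply]

lemma isSwap_permSuccHom {σ : Perm (Fin n)} (hσ : σ.IsSwap) : (permSuccHom n σ).IsSwap := by
  obtain ⟨x, y, hxy, rfl⟩ := hσ
  exact ⟨x.succ, y.succ, (succ_injective n).ne hxy, permSuccHom_swap x y⟩

lemma val_cycleRange (i j : Fin n) :
    (cycleRange i j : ℕ) = if j < i then (j : ℕ) + 1 else if j = i then 0 else (j : ℕ) := by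
  rcases lt_or_ge i j with h | h
  · simp [cycleRange_of_gt h, h.not_gt, h.ne']
  · rw [coe_cycleRange_of_le h]
    grind

lemma cycleRange_succ (j : Fin n) :
    cycleRange j.succ = swap 0 j.succ * cycleRange j.castSucc := by
  ext x : 1
  rw [Perm.mul_apply, swap_apply_def]
  split_ifs <;>
  · simp only [Fin.ext_iff, val_cycleRange, lt_def, val_succ, val_castSucc, val_zero] at *
    split_ifs at * <;> omega

lemma mul_cycleRange_ne_cycleRange {σ : Perm (Fin (n + 1))} (hσ : σ 0 = 0) {i j : Fin (n + 1)}
    (hij : i ≠ j) : σ * cycleRange i ≠ cycleRange j := by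
  intro h
  apply hij
  rw [← cycleRange_symm_zero i, ← cycleRange_symm_zero j, ← h, Perm.mul_def,
    Equiv.symm_trans_apply, (Equiv.symm_apply_eq σ).2 hσ.symm]

lemma isChain_ofFn_cycleRange (n : ℕ) :
    (List.ofFn (cycleRange : Fin (n + 1) → Perm (Fin (n + 1)))).IsChain
      fun a b => (b * a⁻¹).IsSwap := by
  refine List.isChain_ofFn.2 fun i hi => ?_
  have h := cycleRange_succ (⟨i, by omega⟩ : Fin n)
  rw [succ_mk, castSucc_mk] at h
  rw [h, mul_inv_cancel_right]
  exact swap_isSwap_iff.2 (by simp [Fin.ext_iff])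

end Fin

lemma List.Nodup.mem_of_length_eq_card {α : Type*} [Fintype α] {L : List α} (hL : L.Nodup)
    (hlen : L.length = Fintype.card α) (a : α) : a ∈ L := by
  classical
  have hall : L.toFinset = Finset.univ :=
    Finset.eq_univ_of_card _ ((List.toFinset_card_of_nodup hL).trans hlen)
  exact List.mem_toFinset.1 (hall ▸ Finset.mem_univ a)

theorem exists_list_perm_isChain_isSwap (n : ℕ) :
    ∃ L : List (Perm (Fin n)), L.length = n ! ∧ L.head? = some 1 ∧ L.Nodup ∧
      L.IsChain fun a b => (b * a⁻¹).IsSwap := by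
  induction n with
  | zero => exact ⟨[1], rfl, rfl, List.nodup_singleton 1, List.isChain_singleton 1⟩
  | succ n ih =>
    obtain ⟨L, hlen, hhead, hnodup, hchain⟩ := ih
    refine ⟨snake (Fin.permSuccHom n) L (List.ofFn Fin.cycleRange), ?_, ?_, ?_, ?_⟩
    · rw [length_snake, hlen, List.length_ofFn, factorial_succ, mul_comm]
    · simp [List.ofFn_succ, head?_snake_cons, hhead, Fin.cycleRange_zero]
    · refine nodup_snake _ (viaEmbeddingHom_injective _) hnodup (List.pairwise_ofFn.2 ?_)
      exact fun i j hij h => Fin.mul_cycleRange_ne_cycleRange (Fin.permSuccHom_apply_zero h) hij.ne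
    · exact isChain_snake _ (S := {σ : Perm (Fin (n + 1)) | σ.IsSwap}) (fun s hs => hs.inv)
        (fun g s hs => hs.conj g) (hchain.imp fun a b h => Fin.isSwap_permSuccHom h)
        (Fin.isChain_ofFn_cycleRange n)

theorem perm_gray_code_general (n : ℕ) :
    ∃ L : List (Equiv.Perm (Fin n)),
      L.length = n ! ∧
      L.head? = some 1 ∧
      L.Nodup ∧
      (∀ σ : Equiv.Perm (Fin n), σ ∈ L) ∧
      L.Chain' (fun a b => ∃ t : Equiv.Perm (Fin n), t.IsSwap ∧ b = t * a) := by
  obtain ⟨L, hlen, hhead, hnodup, hchain⟩ := exists_list_perm_isChain_isSwap n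
  have hcard : L.length = Fintype.card (Perm (Fin n)) := by
    rw [hlen, Fintype.card_perm, Fintype.card_fin]
  refine ⟨L, hlen, hhead, hnodup, hnodup.mem_of_length_eq_card hcard, ?_⟩
  exact hchain.imp fun a b h => ⟨b * a⁻¹, h, (inv_mul_cancel_right b a).symm⟩

theorem perm_gray_code (n : ℕ) (hn : 1 ≤ n) :
    ∃ L : List (Equiv.Perm (Fin n)),
      L.length = n ! ∧
      L.head? = some 1 ∧
      L.Nodup ∧
      (∀ σ : Equiv.Perm (Fin n), σ ∈ L) ∧
      L.Chain' (fun a b => ∃ t : Equiv.Perm (Fin n), t.IsSwap ∧ b = t * a) :=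
  perm_gray_code_general n
end

section
/- For n ≥ 1, every permutation of n elements can be obtained from the identity by a sequence of at most n-1 transpositions of the form used in the unranking algorithm (swapping position k with some position ≤ k, for k = n-1 down to 1). -/
/-- The transposition swapping `k` with `r ≤ k`, as a permutation of `Fin n`. -/
def mrSwap {n : ℕ} (k : Fin n) (r : Fin (k.1 + 1)) : Equiv.Perm (Fin n) :=
  Equiv.swap k ⟨r.1, Nat.lt_of_lt_of_le r.2 k.2⟩

/-- The Myrvold–Ruskey map: compose the swaps `σ_{k, r_k}` for `k = n-1` down to `0`,
yielding `σ_{0,r_0} ∘ σ_{1,r_1} ∘ ⋯ ∘ σ_{n-1,r_{n-1}}` (note `σ_{0,r_0} = 1`). -/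
def mrMap (n : ℕ) (r : ∀ k : Fin n, Fin (k.1 + 1)) : Equiv.Perm (Fin n) :=
  ((List.finRange n).map (fun k => mrSwap k (r k))).prod

namespace MRAux

/-- Extend a permutation of `Fin n` to `Fin (n+1)` fixing the last element. -/
def lift {n : ℕ} (σ : Equiv.Perm (Fin n)) : Equiv.Perm (Fin (n + 1)) where
  toFun := Fin.lastCases (Fin.last n) (fun i => (σ i).castSucc)
  invFun := Fin.lastCases (Fin.last n) (fun i => (σ.symm i).castSucc)
  left_inv := by
    intro i
    induction i using Fin.lastCases with
    | last => simp
    | cast i => simp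
  right_inv := by
    intro i
    induction i using Fin.lastCases with
    | last => simp
    | cast i => simp

@[simp] lemma lift_last {n : ℕ} (σ : Equiv.Perm (Fin n)) :
    lift σ (Fin.last n) = Fin.last n := by
  simp [lift]

@[simp] lemma lift_castSucc {n : ℕ} (σ : Equiv.Perm (Fin n)) (i : Fin n) :
    lift σ i.castSucc = (σ i).castSucc := by
  simp [lift]

lemma lift_mul {n : ℕ} (σ τ : Equiv.Perm (Fin n)) :
    lift (σ * τ) = lift σ * lift τ := by
  ext i
  induction i using Fin.lastCases with
  | last => simp [Equiv.Perm.mul_apply]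
  | cast i => simp [Equiv.Perm.mul_apply]

lemma lift_one {n : ℕ} : lift (1 : Equiv.Perm (Fin n)) = 1 := by
  ext i
  induction i using Fin.lastCases with
  | last => simp
  | cast i => simp

/-- `lift` as a monoid hom. -/
def liftHom {n : ℕ} : Equiv.Perm (Fin n) →* Equiv.Perm (Fin (n + 1)) where
  toFun := lift
  map_one' := lift_one
  map_mul' := lift_mul

lemma lift_swap {n : ℕ} (a b : Fin n) :
    lift (Equiv.swap a b) = Equiv.swap a.castSucc b.castSucc := by
  ext i
  induction i using Fin.lastCases with
  | last =>
    rw [Equiv.swap_apply_of_ne_of_ne (Fin.castSucc_lt_last a).ne'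
      (Fin.castSucc_lt_last b).ne']
    simp
  | cast i =>
    rw [lift_castSucc, Fin.castSucc_injective n |>.swap_apply]

lemma exists_lift {n : ℕ} (σ : Equiv.Perm (Fin (n + 1))) (h : σ (Fin.last n) = Fin.last n) :
    ∃ τ : Equiv.Perm (Fin n), lift τ = σ := by
  have hne : ∀ i : Fin n, σ i.castSucc ≠ Fin.last n := by
    intro i hi
    exact (Fin.castSucc_lt_last i).ne (σ.injective (hi.trans h.symm))
  have hne' : ∀ i : Fin n, σ.symm i.castSucc ≠ Fin.last n := by
    intro i hi
    have : i.castSucc = Fin.last n := by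
      have := congrArg σ hi
      rwa [Equiv.apply_symm_apply, h] at this
    exact (Fin.castSucc_lt_last i).ne this
  refine ⟨{
    toFun := fun i => (σ i.castSucc).castPred (hne i)
    invFun := fun i => (σ.symm i.castSucc).castPred (hne' i)
    left_inv := by intro i; simp
    right_inv := by intro i; simp }, ?_⟩
  ext i
  induction i using Fin.lastCases with
  | last => simp [h]
  | cast i => simp

end MRAux

open MRAux in
theorem mrMap_surjective (n : ℕ) (hn : 1 ≤ n) :
    Function.Surjective (mrMap n) := by
  clear hn
  induction n with
  | zero =>
    intro π
    exact ⟨fun k => 0, Subsingleton.elim _ _⟩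
  | succ n ih =>
    intro π
    -- the last entry of the rank sequence
    set q : Fin (n + 1) := π⁻¹ (Fin.last n) with hq
    have hqt : q = π.symm (Fin.last n) := rfl
    set q' : Fin ((Fin.last n).1 + 1) := ⟨q.1, by simpa using q.2⟩ with hq'
    have hswap : mrSwap (Fin.last n) q' = Equiv.swap (Fin.last n) q := by
      unfold mrSwap
      congr 1
    set σ : Equiv.Perm (Fin (n + 1)) := π * mrSwap (Fin.last n) q' with hσ
    have hσlast : σ (Fin.last n) = Fin.last n := by
      rw [hσ, hswap, Equiv.Perm.mul_apply, Equiv.swap_apply_left, hqt,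
        Equiv.apply_symm_apply]
    obtain ⟨τ, hτ⟩ := exists_lift σ hσlast
    obtain ⟨r', hr'⟩ := ih τ
    refine ⟨Fin.lastCases (motive := fun k => Fin (k.1 + 1)) q' (fun i => r' i), ?_⟩
    unfold mrMap
    rw [List.finRange_succ_last, List.map_append, List.prod_append, List.map_map]
    simp only [List.map_singleton, List.prod_singleton, Function.comp_def,
      Fin.lastCases_last, Fin.lastCases_castSucc]
    have hstep : ∀ i : Fin n,
        mrSwap (Fin.castSucc i) (r' i) = lift (mrSwap i (r' i)) := by
      intro i
      unfold mrSwap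
      rw [lift_swap]
      congr 1
    have : ((List.finRange n).map fun i => mrSwap (Fin.castSucc i) (r' i)).prod
        = lift (mrMap n r') := by
      have : ((List.finRange n).map fun i => mrSwap (Fin.castSucc i) (r' i))
          = ((List.finRange n).map fun i => liftHom (mrSwap i (r' i))) := by
        simp only [hstep]; rfl
      rw [this,
        show (fun i => liftHom (n := n) (mrSwap i (r' i)))
          = liftHom ∘ (fun i => mrSwap i (r' i)) from rfl,
        ← List.map_map, ← MonoidHom.map_list_prod]
      rfl
    rw [this, hr', hτ, hσ, mul_assoc]
    rw [hswap, Equiv.swap_mul_self, mul_one]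
end
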